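/- In the minimal counterexample (G, C_0), a 4-vertex v with neighbors v1, v2, v3, v4 cannot simultaneously be incident to a (3,4,5^-)-face f1 = v3vv4 and a (3,4,3,5^+)-face f2 = v1vv2w with (b(f1) ∪ b(f2)) ∩ C_0 = ∅. -/

import Mathlib

/-!
Common definitions for formalizing "A relaxation of the Bordeaux Conjecture"
(Liu, Li, Yu).  We model a plane graph combinatorially: a simple graph together
with a set of faces (each given by its boundary cycle, a list of vertices in
cyclic order), a distinguished outer face, and, for each cycle, the sets of
vertices drawn strictly inside and strictly outside of it.

A (2,0,0)-coloring uses colors `0, 1, 2 : Fin 3`, where color `0` is the color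
of deficiency 2 (called "color 1" in the paper) and colors `1` and `2` must
induce independent sets.
-/

variable {V : Type} [Fintype V] [DecidableEq V]

/-- `l` is the list of vertices of a cycle of `G`, in cyclic order. -/
def IsCycleList (G : SimpleGraph V) (l : List V) : Prop :=
  3 ≤ l.length ∧ l.Nodup ∧ ∀ p ∈ l.zip (l.rotate 1), G.Adj p.1 p.2

/-- Two lists represent the same cyclic sequence, up to rotation and reflection. -/
def SameCycle (l l' : List V) : Prop :=
  ∃ n : ℕ, l'.rotate n = l ∨ l'.reverse.rotate n = l

/-- `u` and `v` are consecutive vertices (i.e. joined by an edge) of the cycle `l`. -/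
def CycAdj (l : List V) (u v : V) : Prop :=
  (u, v) ∈ l.zip (l.rotate 1) ∨ (v, u) ∈ l.zip (l.rotate 1)

/-- A combinatorial model of a plane graph. -/
structure PlaneGraph (V : Type) [Fintype V] [DecidableEq V] where
  /-- the underlying abstract simple graph -/
  G : SimpleGraph V
  /-- the faces, given by their boundary cycles -/
  faces : Set (List V)
  /-- the boundary cycle of the outer (unbounded) face -/
  outer : List V
  outer_mem : outer ∈ faces
  faces_cycle : ∀ l ∈ faces, IsCycleList G l
  /-- the set of vertices strictly inside a cycle -/
  inside : List V → Set V
  /-- the set of vertices strictly outside a cycle -/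
  outside : List V → Set V
  inside_outside_cover : ∀ l, IsCycleList G l → ∀ v : V,
    v ∈ inside l ∨ v ∈ outside l ∨ v ∈ l
  inside_outside_disjoint : ∀ l, Disjoint (inside l) (outside l)
  on_cycle_not_inside_outside : ∀ l, ∀ v ∈ l, v ∉ inside l ∧ v ∉ outside l
  no_edge_inside_outside : ∀ l, IsCycleList G l →
    ∀ u ∈ inside l, ∀ v ∈ outside l, ¬ G.Adj u v
  inner_face_inside_empty : ∀ l ∈ faces, ¬ SameCycle l outer → inside l = ∅
  outer_outside_empty : outside outer = ∅

namespace PlaneGraph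

/-- `l` is the boundary cycle of a face of `P` (up to rotation/reflection). -/
def IsFace (P : PlaneGraph V) (l : List V) : Prop :=
  ∃ l' ∈ P.faces, SameCycle l l'

/-- The degree of a vertex. -/
noncomputable def deg (P : PlaneGraph V) (v : V) : ℕ :=
  {u | P.G.Adj v u}.ncard

/-- A separating cycle: there are vertices strictly inside and strictly outside. -/
def Separating (P : PlaneGraph V) (l : List V) : Prop :=
  IsCycleList P.G l ∧ (P.inside l).Nonempty ∧ (P.outside l).Nonempty

end PlaneGraph

/-- `a`, `b`, `c` span a triangle of `G`. -/
def IsTriangle (G : SimpleGraph V) (a b c : V) : Prop :=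
  G.Adj a b ∧ G.Adj b c ∧ G.Adj c a

/-- `v` is incident to (i.e. lies on) some triangle of `G`. -/
def OnTriangle (G : SimpleGraph V) (v : V) : Prop :=
  ∃ a b : V, IsTriangle G v a b

/-- `G` contains no cycle of length 5. -/
def NoFiveCycle (G : SimpleGraph V) : Prop :=
  ∀ l : List V, IsCycleList G l → l.length ≠ 5

/-- No two distinct triangles of `G` share a vertex. -/
def NoIntersectingTriangles (G : SimpleGraph V) : Prop :=
  ∀ a b c d e f : V, IsTriangle G a b c → IsTriangle G d e f →
    (({a, b, c} : Set V) ∩ ({d, e, f} : Set V)).Nonempty →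
    ({a, b, c} : Set V) = ({d, e, f} : Set V)

/-- Membership in the family `𝒢` of plane graphs with no 5-cycles and no
two triangles sharing a vertex. -/
def PlaneGraph.InFamilyG (P : PlaneGraph V) : Prop :=
  NoFiveCycle P.G ∧ NoIntersectingTriangles P.G

/-- A (2,0,0)-coloring of `G`: color `0` induces a subgraph of maximum degree
at most `2`, and colors `1` and `2` induce independent sets. -/
def IsCol200 (G : SimpleGraph V) (c : V → Fin 3) : Prop :=
  (∀ u v : V, G.Adj u v → c u ≠ 0 → c u ≠ c v) ∧
  (∀ v : V, c v = 0 → {u | G.Adj v u ∧ c u = 0}.ncard ≤ 2)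

/-- A (2,0,0)-coloring of the cycle `l`, viewed as a subgraph. -/
def IsCol200Cycle (l : List V) (c : V → Fin 3) : Prop :=
  (∀ u v : V, CycAdj l u v → c u ≠ 0 → c u ≠ c v) ∧
  (∀ v ∈ l, c v = 0 → {u | CycAdj l u v ∧ c u = 0}.ncard ≤ 2)

/-- `c` agrees with `c₀` on the cycle `l` and every vertex off `l` receives a
color different from those of all of its neighbors on `l`. -/
def SuperextendsOn (G : SimpleGraph V) (l : List V) (c₀ c : V → Fin 3) : Prop :=
  (∀ v ∈ l, c v = c₀ v) ∧ ∀ v : V, v ∉ l → ∀ u ∈ l, G.Adj v u → c v ≠ c u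

/-- `(G, l)` is superextendable: every (2,0,0)-coloring of the cycle `l` extends to
a (2,0,0)-coloring of `G` in which every vertex off `l` gets a color different from
those of all of its neighbors on `l`. -/
def Superextendable (G : SimpleGraph V) (l : List V) : Prop :=
  ∀ c₀ : V → Fin 3, IsCol200Cycle l c₀ →
    ∃ c : V → Fin 3, IsCol200 G c ∧ SuperextendsOn G l c₀ c

/-- `σ(G) = |V(G)| + |E(G)|`. -/
noncomputable def PlaneGraph.sigma (P : PlaneGraph V) : ℕ :=
  Fintype.card V + P.G.edgeSet.ncard

/-- `(P, C₀)` is a counterexample to the main theorem that minimizes `σ`: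
`P` is a plane graph in `𝒢`, `C₀` is a triangle or a 7-cycle of `P`,
`(P, C₀)` is not superextendable, and every pair `(P', C')` of this kind with
smaller `σ` is superextendable. -/
def IsMinCex (P : PlaneGraph V) (C₀ : List V) : Prop :=
  P.InFamilyG ∧ IsCycleList P.G C₀ ∧ (C₀.length = 3 ∨ C₀.length = 7) ∧
  ¬ Superextendable P.G C₀ ∧
  ∀ (n : ℕ) (P' : PlaneGraph (Fin n)) (C' : List (Fin n)),
    P'.InFamilyG → IsCycleList P'.G C' → (C'.length = 3 ∨ C'.length = 7) →
    P'.sigma < P.sigma → Superextendable P'.G C'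

/-- The graph obtained from `G` by identifying the vertices `u` and `w` (the merged
vertex is `u`; the vertex `w` becomes isolated). -/
def identify (G : SimpleGraph V) (u w : V) : SimpleGraph V where
  Adj x y := x ≠ y ∧ x ≠ w ∧ y ≠ w ∧
    (G.Adj x y ∨ (x = u ∧ G.Adj w y) ∨ (y = u ∧ G.Adj x w))
  symm := ⟨by
    rintro x y ⟨hxy, hxw, hyw, h⟩
    refine ⟨hxy.symm, hyw, hxw, ?_⟩
    rcases h with h | ⟨hx, h⟩ | ⟨hy, h⟩
    · exact Or.inl h.symm
    · exact Or.inr (Or.inr ⟨hx, h.symm⟩)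
    · exact Or.inr (Or.inl ⟨hy, h.symm⟩)⟩
  loopless := ⟨by
    rintro x ⟨hxx, -⟩
    exact hxx rfl⟩

/-- The graph obtained from `G` by deleting the vertices of `S`
(the deleted vertices become isolated). -/
def delVerts (G : SimpleGraph V) (S : Set V) : SimpleGraph V where
  Adj x y := G.Adj x y ∧ x ∉ S ∧ y ∉ S
  symm := ⟨fun _ _ h => ⟨h.1.symm, h.2.2, h.2.1⟩⟩
  loopless := ⟨fun x h => G.loopless.irrefl x h.1⟩

/-- Base special 3-faces: `(3,3,5⁻)`-faces and `(3,4,4)`-faces disjoint from `C₀`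
(the first listed vertex is a 3-vertex). -/
def IsBaseSpecial (P : PlaneGraph V) (C₀ : List V) (u v w : V) : Prop :=
  P.IsFace [u, v, w] ∧ u ∉ C₀ ∧ v ∉ C₀ ∧ w ∉ C₀ ∧ P.deg u = 3 ∧
    ((P.deg v = 3 ∧ P.deg w ≤ 5) ∨ (P.deg v = 4 ∧ P.deg w = 4))

/-- Special 3-faces of rank at most `n`, following the paper's recursive
definition: the base special faces are the `(3,3,5⁻)`- and `(3,4,4)`-faces
disjoint from `C₀`; a `(3,5,5)`-face `uvw` (disjoint from `C₀`, with `d(u)=3`)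
is special of rank `n+1` when each off-face neighbor of each of its two
5-vertices is a 3-vertex lying on a pendant special 3-face of rank at most `n`,
i.e. the two 5-vertices have six pendant special 3-faces altogether. -/
def SpecialRank (P : PlaneGraph V) (C₀ : List V) : ℕ → V → V → V → Prop
  | 0 => fun u v w => IsBaseSpecial P C₀ u v w
  | n + 1 => fun u v w =>
      SpecialRank P C₀ n u v w ∨
      (P.IsFace [u, v, w] ∧ u ∉ C₀ ∧ v ∉ C₀ ∧ w ∉ C₀ ∧
        P.deg u = 3 ∧ P.deg v = 5 ∧ P.deg w = 5 ∧
        (∀ x : V, P.G.Adj v x → x ≠ u → x ≠ w →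
          ∃ a b c : V, SpecialRank P C₀ n a b c ∧ v ≠ a ∧ v ≠ b ∧ v ≠ c ∧
            (x = a ∨ x = b ∨ x = c) ∧ P.deg x = 3) ∧
        (∀ x : V, P.G.Adj w x → x ≠ u → x ≠ v →
          ∃ a b c : V, SpecialRank P C₀ n a b c ∧ w ≠ a ∧ w ≠ b ∧ w ≠ c ∧
            (x = a ∨ x = b ∨ x = c) ∧ P.deg x = 3))

/-- `uvw` is a special 3-face (of some rank). -/
def IsSpecial (P : PlaneGraph V) (C₀ : List V) (u v w : V) : Prop :=
  ∃ n : ℕ, SpecialRank P C₀ n u v w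

/-- The set `S` is the vertex set of a special 3-face. -/
def IsSpecialOn (P : PlaneGraph V) (C₀ : List V) (S : Set V) : Prop :=
  ∃ a b c : V, IsSpecial P C₀ a b c ∧ S = {a, b, c}

/-- `S` is the vertex set of a pendant special 3-face of `y`:  a special 3-face
not containing `y` one of whose 3-vertices is adjacent to `y`. -/
def PendantSpecial (P : PlaneGraph V) (C₀ : List V) (y : V) (S : Set V) : Prop :=
  IsSpecialOn P C₀ S ∧ y ∉ S ∧ ∃ x ∈ S, P.deg x = 3 ∧ P.G.Adj y x

/-- The number of pendant special 3-faces of `y`. -/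
noncomputable def pendCount (P : PlaneGraph V) (C₀ : List V) (y : V) : ℕ :=
  {S : Set V | PendantSpecial P C₀ y S}.ncard

/-!
Deleting `v` gives a graph with fewer edges, so by minimality every bad precolouring of `C₀`
extends to `G - v`. This extension is repaired locally. If `v₄` has colour `0` while a nonzero
colour is missing from its other neighbours, `v₄` takes that colour; then `v₃`, `v₁`, `v₂`, each
with only two neighbours besides `v`, take a colour missing from their neighbourhoods. Finally `v`
takes a nonzero colour missing from its four neighbours, or `0` if both `1` and `2` occur there.
In the latter case `v` has at most two `0`-neighbours, `v₁`, `v₂`, `v₃` have no other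
`0`-neighbour, and a `0`-coloured `v₄` has at most one: its at most three neighbours other than
`v` and `v₃` include the colours `1` and `2`, and `v₃` is not coloured `0`.
-/

section Transport

variable {U W : Type} {G : SimpleGraph U} {H : SimpleGraph W}

lemma SameCycle.mem_iff {l l' : List U} (h : SameCycle l l') {a : U} : a ∈ l ↔ a ∈ l' := by
  obtain ⟨n, rfl | rfl⟩ := h <;> simp

lemma SameCycle.length_eq {l l' : List U} (h : SameCycle l l') : l.length = l'.length := by
  obtain ⟨n, rfl | rfl⟩ := h <;> simp

lemma IsCycleList.adj_of_length_eq_three {l : List U} (hl : IsCycleList G l) (h3 : l.length = 3)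
    {a b : U} (ha : a ∈ l) (hb : b ∈ l) (hab : a ≠ b) : G.Adj a b := by
  obtain ⟨x, y, z, rfl⟩ : ∃ x y z, l = [x, y, z] := by
    match l, h3 with | [x, y, z], _ => exact ⟨x, y, z, rfl⟩
  have hxy := hl.2.2 (x, y) (by simp)
  have hyz := hl.2.2 (y, z) (by simp)
  have hzx := hl.2.2 (z, x) (by simp)
  simp only [List.mem_cons, List.not_mem_nil, or_false] at ha hb
  rcases ha with rfl | rfl | rfl <;> rcases hb with rfl | rfl | rfl <;>
    first | exact absurd rfl hab | assumption | exact SimpleGraph.Adj.symm ‹_›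

lemma IsCycleList.map (f : G →g H) (hf : Function.Injective f) {l : List U}
    (hl : IsCycleList G l) : IsCycleList H (l.map f) := by
  obtain ⟨hlen, hnodup, hadj⟩ := hl
  refine ⟨by simpa using hlen, hnodup.map hf, ?_⟩
  rw [← List.map_rotate, List.zip_map]
  simp only [List.mem_map, forall_exists_index, and_imp]
  rintro _ p hp rfl
  exact f.map_rel (hadj p hp)

lemma NoFiveCycle.of_hom (f : G →g H) (hf : Function.Injective f) (h : NoFiveCycle H) :
    NoFiveCycle G := fun l hl => by simpa using h _ (hl.map f hf)

lemma IsTriangle.map (f : G →g H) {a b c : U} (h : IsTriangle G a b c) :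
    IsTriangle H (f a) (f b) (f c) :=
  ⟨f.map_rel h.1, f.map_rel h.2.1, f.map_rel h.2.2⟩

lemma NoIntersectingTriangles.of_hom (f : G →g H) (hf : Function.Injective f)
    (h : NoIntersectingTriangles H) : NoIntersectingTriangles G := by
  intro a b c d e g habc hdeg hint
  have himage : ∀ x y z : U, f '' {x, y, z} = {f x, f y, f z} := by
    simp [Set.image_insert_eq]
  apply Set.image_injective.mpr hf
  rw [himage, himage]
  refine h _ _ _ _ _ _ (habc.map f) (hdeg.map f) ?_
  rw [← himage, ← himage, ← Set.image_inter hf]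
  exact hint.image f

lemma cycAdj_map_iff {f : U → W} (hf : Function.Injective f) {l : List U} {a b : U} :
    CycAdj (l.map f) (f a) (f b) ↔ CycAdj l a b := by
  have hff := hf.prodMap hf
  simp only [CycAdj, ← List.map_rotate, List.zip_map]
  exact or_congr (List.mem_map_of_injective (a := (a, b)) hff)
    (List.mem_map_of_injective (a := (b, a)) hff)

lemma ncard_setOf_equiv (e : U ≃ W) (p : W → Prop) : {w | p w}.ncard = {u | p (e u)}.ncard :=
  (Set.ncard_preimage_of_injective_subset_range e.injective (by simp)).symm

lemma IsCol200Cycle.map (e : U ≃ W) {l : List U} {c : U → Fin 3} (h : IsCol200Cycle l c) :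
    IsCol200Cycle (l.map e) (c ∘ e.symm) := by
  refine ⟨e.surjective.forall₂.mpr fun a b hab => ?_, e.surjective.forall.mpr fun a ha => ?_⟩
  · simpa using h.1 a b ((cycAdj_map_iff e.injective).mp hab)
  · rw [ncard_setOf_equiv e]
    simpa [cycAdj_map_iff e.injective] using
      h.2 a ((List.mem_map_of_injective e.injective).mp ha)

lemma Superextendable.of_iso (φ : G ≃g H) {l : List U} (h : Superextendable H (l.map φ)) :
    Superextendable G l := by
  intro c₀ hc₀
  obtain ⟨c, ⟨hc₁, hc₂⟩, hagree, hoff⟩ := h (c₀ ∘ φ.symm) (hc₀.map φ.toEquiv)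
  have hmem : ∀ {x}, φ x ∈ l.map φ ↔ x ∈ l := List.mem_map_of_injective φ.injective
  refine ⟨c ∘ φ, ⟨fun x y hxy => hc₁ _ _ (φ.map_adj_iff.mpr hxy), fun x hx => ?_⟩,
    fun x hx => by simpa using hagree _ (hmem.mpr hx),
    fun x hx y hy hxy => hoff _ (hmem.not.mpr hx) _ (hmem.mpr hy) (φ.map_adj_iff.mpr hxy)⟩
  have := hc₂ (φ x) hx
  rw [ncard_setOf_equiv φ.toEquiv] at this
  simpa [φ.map_adj_iff] using this

end Transport

/-- Lets the minimality in `IsMinCex`, which ranges over all `PlaneGraph`s, be applied to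
subgraphs. -/
def PlaneGraph.ofCycle {G : SimpleGraph V} {C : List V} (hC : IsCycleList G C) :
    PlaneGraph V where
  G := G
  faces := {C}
  outer := C
  outer_mem := rfl
  faces_cycle := by rintro l rfl; exact hC
  inside l := {x | x ∉ l}
  outside _ := ∅
  inside_outside_cover l _ x := by by_cases hx : x ∈ l <;> simp [hx]
  inside_outside_disjoint _ := Set.disjoint_empty _
  on_cycle_not_inside_outside _ _ hx := ⟨not_not_intro hx, Set.notMem_empty _⟩
  no_edge_inside_outside _ _ _ _ _ hv := hv.elim
  inner_face_inside_empty := by rintro l rfl hl; exact absurd ⟨0, Or.inl (List.rotate_zero l)⟩ hl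
  outer_outside_empty := rfl

lemma PlaneGraph.IsFace.adj_of_length_eq_three {P : PlaneGraph V} {l : List V} (hf : P.IsFace l)
    (h3 : l.length = 3) {a b : V} (ha : a ∈ l) (hb : b ∈ l) (hab : a ≠ b) : P.G.Adj a b :=
  let ⟨l', hl', hs⟩ := hf
  (P.faces_cycle l' hl').adj_of_length_eq_three (hs.length_eq ▸ h3) (hs.mem_iff.mp ha)
    (hs.mem_iff.mp hb) hab

lemma IsMinCex.superextendable_of_lt {P : PlaneGraph V} {C₀ : List V} (h : IsMinCex P C₀)
    {D : SimpleGraph V} (hlt : D < P.G) (hC : IsCycleList D C₀) : Superextendable D C₀ := by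
  obtain ⟨⟨h5, h3⟩, -, hlen, -, hmin⟩ := h
  let φ := D.overFinIso rfl
  have hC' := hC.map φ.toHom φ.injective
  let f : D.overFin rfl →g P.G := (SimpleGraph.Hom.ofLE hlt.le).comp φ.symm.toHom
  refine .of_iso φ (hmin _ (.ofCycle hC') _ ⟨h5.of_hom f φ.symm.injective,
    h3.of_hom f φ.symm.injective⟩ hC' (by simpa using hlen) ?_)
  have hedges : (D.overFin rfl).edgeSet.ncard = D.edgeSet.ncard :=
    (Nat.card_congr φ.mapEdgeSet).symm
  have hlt' : D.edgeSet.ncard < P.G.edgeSet.ncard :=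
    Set.ncard_lt_ncard (SimpleGraph.edgeSet_ssubset_edgeSet.mpr hlt)
  change Fintype.card (Fin _) + (D.overFin rfl).edgeSet.ncard < _
  rw [Fintype.card_fin, hedges, PlaneGraph.sigma]
  omega

section Deletion

variable {U : Type} {G : SimpleGraph U} {l : List U}

lemma delVerts_le (S : Set U) : delVerts G S ≤ G := fun _ _ h => h.1

lemma delVerts_lt {S : Set U} {x y : U} (hx : x ∈ S) (hxy : G.Adj x y) : delVerts G S < G :=
  lt_of_le_of_ne (delVerts_le S) fun h => by
    have : (delVerts G S).Adj x y := by rw [h]; exact hxy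
    exact this.2.1 hx

lemma IsCycleList.delVerts {S : Set U} (hl : IsCycleList G l) (hS : ∀ x ∈ l, x ∉ S) :
    IsCycleList (delVerts G S) l :=
  ⟨hl.1, hl.2.1, fun p hp => ⟨hl.2.2 p hp, hS _ (List.of_mem_zip hp).1,
    hS _ (List.mem_rotate.mp (List.of_mem_zip hp).2)⟩⟩

end Deletion

section Recoloring

def IsSuperextension (G : SimpleGraph V) (l : List V) (c₀ c : V → Fin 3) : Prop :=
  IsCol200 G c ∧ SuperextendsOn G l c₀ c

def ProperAt (G : SimpleGraph V) (c : V → Fin 3) (x : V) : Prop :=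
  ∀ y, G.Adj x y → c y ≠ c x

variable {G H : SimpleGraph V} {l : List V} {c₀ c : V → Fin 3} {x : V} {k : Fin 3}

omit [DecidableEq V] in
lemma IsSuperextension.mono (hHG : H ≤ G) (hc : IsSuperextension G l c₀ c) :
    IsSuperextension H l c₀ c :=
  ⟨⟨fun a b hab => hc.1.1 a b (hHG hab), fun a ha =>
    (Set.ncard_le_ncard (t := {u | G.Adj a u ∧ c u = 0})
      fun _ hu => ⟨hHG hu.1, hu.2⟩).trans (hc.1.2 a ha)⟩,
    hc.2.1, fun a ha u hu hau => hc.2.2 a ha u hu (hHG hau)⟩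

omit [Fintype V] in
lemma SuperextendsOn.update (hxl : x ∉ l) (hc : SuperextendsOn (delVerts G {x}) l c₀ c)
    (hl : ∀ u ∈ l, G.Adj x u → c u ≠ k) : SuperextendsOn G l c₀ (Function.update c x k) := by
  refine ⟨fun a hal => ?_, fun a hal u hul hau => ?_⟩
  · rw [Function.update_of_ne (ne_of_mem_of_not_mem hal hxl)]
    exact hc.1 a hal
  · have hux : u ≠ x := ne_of_mem_of_not_mem hul hxl
    rw [Function.update_of_ne hux]
    rcases eq_or_ne a x with rfl | hax
    · rw [Function.update_self]
      exact (hl u hul hau).symm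
    · rw [Function.update_of_ne hax]
      exact hc.2 a hal u hul ⟨hau, hax, hux⟩

lemma IsCol200.update (hc : IsCol200 (delVerts G {x}) c)
    (hrep : ∀ y, G.Adj x y → c y = k → k = 0)
    (hzero : k = 0 → {y | G.Adj x y ∧ c y = 0}.ncard ≤ 2 ∧
      ∀ y, G.Adj x y → c y = 0 → {u | (delVerts G {x}).Adj y u ∧ c u = 0}.ncard ≤ 1) :
    IsCol200 G (Function.update c x k) := by
  refine ⟨fun a b hab ha => ?_, fun a ha => ?_⟩
  · rcases eq_or_ne a x with rfl | hax
    · simp only [Function.update_self, Function.update_of_ne hab.ne'] at ha ⊢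
      exact fun hb => ha (hrep b hab hb.symm)
    rcases eq_or_ne b x with rfl | hbx
    · simp only [Function.update_self, Function.update_of_ne hax] at ha ⊢
      exact fun hak => ha (hak ▸ hrep a hab.symm hak)
    simp only [Function.update_of_ne hax, Function.update_of_ne hbx] at ha ⊢
    exact hc.1 a b ⟨hab, hax, hbx⟩ ha
  rcases eq_or_ne a x with rfl | hax
  · rw [Function.update_self] at ha
    refine (Set.ncard_le_ncard ?_).trans (hzero ha).1
    rintro u ⟨hau, hu⟩
    exact ⟨hau, by simpa [Function.update_of_ne hau.ne'] using hu⟩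
  rw [Function.update_of_ne hax] at ha
  by_cases hax' : G.Adj a x ∧ k = 0
  · calc {u | G.Adj a u ∧ Function.update c x k u = 0}.ncard
        ≤ (insert x {u | (delVerts G {x}).Adj a u ∧ c u = 0}).ncard :=
          Set.ncard_le_ncard fun u ⟨hau, hu⟩ => by
            rcases eq_or_ne u x with rfl | hux
            · exact Set.mem_insert _ _
            · exact Or.inr ⟨⟨hau, hax, hux⟩, by simpa [hux] using hu⟩
      _ ≤ {u | (delVerts G {x}).Adj a u ∧ c u = 0}.ncard + 1 := Set.ncard_insert_le _ _
      _ ≤ 2 := by linarith [(hzero hax'.2).2 a hax'.1.symm ha]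
  · refine (Set.ncard_le_ncard ?_).trans (hc.2 a ha)
    rintro u ⟨hau, hu⟩
    rcases eq_or_ne u x with rfl | hux
    · exact absurd ⟨hau, by simpa using hu⟩ hax'
    · exact ⟨⟨hau, hax, hux⟩, by simpa [hux] using hu⟩

lemma IsSuperextension.update (hxl : x ∉ l) (hc : IsSuperextension (delVerts G {x}) l c₀ c)
    (hrep : ∀ y, G.Adj x y → c y = k → k = 0)
    (hzero : k = 0 → {y | G.Adj x y ∧ c y = 0}.ncard ≤ 2 ∧
      ∀ y, G.Adj x y → c y = 0 → {u | (delVerts G {x}).Adj y u ∧ c u = 0}.ncard ≤ 1)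
    (hl : ∀ u ∈ l, G.Adj x u → c u ≠ k) :
    IsSuperextension G l c₀ (Function.update c x k) :=
  ⟨hc.1.update hrep hzero, hc.2.update hxl hl⟩

lemma IsSuperextension.update_of_forall_ne (hxl : x ∉ l)
    (hc : IsSuperextension (delVerts G {x}) l c₀ c) (hk : ∀ y, G.Adj x y → c y ≠ k) :
    IsSuperextension G l c₀ (Function.update c x k) := by
  refine hc.update hxl (fun y hy hyk => absurd hyk (hk y hy)) (fun hk0 => ?_)
    (fun u _ hu => hk u hu)
  subst hk0
  have hempty : {y | G.Adj x y ∧ c y = 0} = ∅ :=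
    Set.eq_empty_of_forall_notMem fun y hy => hk y hy.1 hy.2
  exact ⟨by simp [hempty], fun y hy hy0 => absurd hy0 (hk y hy)⟩

omit [Fintype V] in
lemma properAt_update_self (hk : ∀ y, G.Adj x y → c y ≠ k) :
    ProperAt G (Function.update c x k) x := fun y hy => by
  simpa [Function.update_of_ne hy.ne'] using hk y hy

omit [Fintype V] in
lemma ProperAt.update {y : V} (hp : ProperAt (delVerts G {x}) c y) (hyx : y ≠ x)
    (hk : ∀ u, G.Adj x u → c u ≠ k) : ProperAt G (Function.update c x k) y := fun u hu => by
  rw [Function.update_of_ne hyx]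
  rcases eq_or_ne u x with rfl | hux
  · rw [Function.update_self]
    exact (hk y hu.symm).symm
  · rw [Function.update_of_ne hux]
    exact hp u ⟨hu, hyx, hux⟩

omit [Fintype V] [DecidableEq V] in
lemma ProperAt.ncard_adj_eq_le (hp : ProperAt G c x) (n : ℕ) :
    {u | G.Adj x u ∧ c u = c x}.ncard ≤ n := by
  have hempty : {u | G.Adj x u ∧ c u = c x} = ∅ :=
    Set.eq_empty_of_forall_notMem fun u hu => hp u hu.1 hu.2
  simp [hempty]

end Recoloring

section Extension

variable {G H : SimpleGraph V} {l : List V} {c₀ c : V → Fin 3} {x : V}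

omit [DecidableEq V] in
lemma exists_color_forall_ne {s : Set V} (hs : s.ncard ≤ 2) (c : V → Fin 3) :
    ∃ k, ∀ y ∈ s, c y ≠ k := by
  by_contra! hall
  have himage : c '' s = Set.univ := Set.eq_univ_of_forall fun k => by
    obtain ⟨y, hy, rfl⟩ := hall k
    exact ⟨y, hy, rfl⟩
  have := Set.ncard_image_le (f := c) (s := s)
  rw [himage, Set.ncard_univ, Nat.card_eq_fintype_card, Fintype.card_fin] at this
  omega

omit [DecidableEq V] in
lemma ncard_color_eq_zero_le {s : Set V} {n : ℕ} (hs : s.ncard ≤ n + 2) {y z : V} (hy : y ∈ s)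
    (hz : z ∈ s) (hy1 : c y = 1) (hz2 : c z = 2) : {u | u ∈ s ∧ c u = 0}.ncard ≤ n := by
  have hyz : y ≠ z := fun h => absurd (hz2 ▸ h ▸ hy1) (by decide)
  calc {u | u ∈ s ∧ c u = 0}.ncard ≤ (s \ {y, z}).ncard := by
        refine Set.ncard_le_ncard ?_
        rintro u ⟨hu, hu0⟩
        refine ⟨hu, ?_⟩
        rintro (rfl | rfl) <;> simp_all
    _ = s.ncard - 2 := by rw [Set.ncard_sdiff (Set.pair_subset hy hz), Set.ncard_pair hyz]
    _ ≤ n := by omega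

omit [DecidableEq V] in
lemma ncard_adj_le_of_le (hHG : H ≤ G) (x : V) :
    {y | H.Adj x y}.ncard ≤ {y | G.Adj x y}.ncard :=
  Set.ncard_le_ncard fun _ hy => hHG hy

omit [DecidableEq V] in
lemma ncard_adj_delVerts_add_one {v : V} (hxv : G.Adj x v) :
    {y | (delVerts G {v}).Adj x y}.ncard + 1 = {y | G.Adj x y}.ncard := by
  have hset : {y | (delVerts G {v}).Adj x y} = {y | G.Adj x y} \ {v} :=
    Set.ext fun _ => ⟨fun h => ⟨h.1, h.2.2⟩, fun h => ⟨h.1, hxv.ne, h.2⟩⟩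
  rw [hset]
  exact Set.ncard_sdiff_singleton_add_one hxv

omit [DecidableEq V] in
lemma ncard_adj_color_eq_zero_le_one (hdeg : {u | H.Adj x u}.ncard ≤ 4) {w y z : V}
    (hw : H.Adj x w) (hw0 : c w ≠ 0) (hy : H.Adj x y) (hz : H.Adj x z) (hyw : y ≠ w)
    (hzw : z ≠ w) (hy1 : c y = 1) (hz2 : c z = 2) : {u | H.Adj x u ∧ c u = 0}.ncard ≤ 1 := by
  have hs : ({u | H.Adj x u} \ {w}).ncard ≤ 1 + 2 := by
    have := Set.ncard_sdiff_singleton_add_one (s := {u | H.Adj x u}) hw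
    omega
  refine (Set.ncard_le_ncard ?_).trans (ncard_color_eq_zero_le hs ⟨hy, hyw⟩ ⟨hz, hzw⟩ hy1 hz2)
  rintro u ⟨hu, hu0⟩
  exact ⟨⟨hu, fun huw => hw0 (Set.mem_singleton_iff.mp huw ▸ hu0)⟩, hu0⟩

lemma mem_of_adj_of_ncard_le_length {v : V} {s : List V} (hs : s.Nodup)
    (hadj : ∀ u ∈ s, G.Adj v u) (hdeg : {u | G.Adj v u}.ncard ≤ s.length) {u : V}
    (hu : G.Adj v u) : u ∈ s := by
  have hcard : {u | u ∈ s}.ncard = s.length := by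
    rw [← List.toFinset_card_of_nodup hs, ← Set.ncard_coe_finset]
    congr
    ext
    simp
  have heq := Set.eq_of_subset_of_ncard_le (s := {u | u ∈ s}) (fun u hu => hadj u hu)
    (hcard ▸ hdeg)
  exact heq.symm.subset hu

lemma IsSuperextension.exists_properAt (hxl : x ∉ l)
    (hc : IsSuperextension (delVerts G {x}) l c₀ c) (hdeg : {y | G.Adj x y}.ncard ≤ 2) :
    ∃ c', IsSuperextension G l c₀ c' ∧ (∀ y ≠ x, c' y = c y) ∧ ProperAt G c' x ∧
      ∀ y ≠ x, ProperAt (delVerts G {x}) c y → ProperAt G c' y := by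
  obtain ⟨k, hk⟩ := exists_color_forall_ne hdeg c
  exact ⟨_, hc.update_of_forall_ne hxl hk, fun y hy => Function.update_of_ne hy _ _,
    properAt_update_self hk, fun y hy hp => hp.update hy hk⟩

lemma IsSuperextension.exists_nonzero_or_two_colors (hxl : x ∉ l)
    (hc : IsSuperextension G l c₀ c) :
    ∃ c', IsSuperextension G l c₀ c' ∧
      (c' x = 0 → (∃ y, G.Adj x y ∧ c' y = 1) ∧ ∃ y, G.Adj x y ∧ c' y = 2) := by
  by_cases hfree : ∃ k ≠ 0, ∀ y, G.Adj x y → c y ≠ k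
  · obtain ⟨k, hk0, hk⟩ := hfree
    exact ⟨_, (hc.mono (delVerts_le _)).update_of_forall_ne hxl hk, by simp [hk0]⟩
  · push Not at hfree
    exact ⟨c, hc, fun _ => ⟨hfree 1 (by decide), hfree 2 (by decide)⟩⟩

lemma IsSuperextension.exists_of_ncard_adj_le_four (hxl : x ∉ l)
    (hc : IsSuperextension (delVerts G {x}) l c₀ c) (hdeg : {y | G.Adj x y}.ncard ≤ 4)
    (hnbr : ∀ y, G.Adj x y → c y = 0 → {u | (delVerts G {x}).Adj y u ∧ c u = 0}.ncard ≤ 1)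
    (hl : ∀ u ∈ l, ¬G.Adj x u) : ∃ c', IsSuperextension G l c₀ c' := by
  by_cases hfree : ∃ k ≠ 0, ∀ y, G.Adj x y → c y ≠ k
  · obtain ⟨k, -, hk⟩ := hfree
    exact ⟨_, hc.update_of_forall_ne hxl hk⟩
  · push Not at hfree
    obtain ⟨y, hy, hy1⟩ := hfree 1 (by decide)
    obtain ⟨z, hz, hz2⟩ := hfree 2 (by decide)
    exact ⟨_, hc.update hxl (fun _ _ _ => rfl)
      (fun _ => ⟨ncard_color_eq_zero_le hdeg hy hz hy1 hz2, hnbr⟩)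
      fun u hu hxu => absurd hxu (hl u hu)⟩

end Extension

lemma IsSuperextension.exists_properAt_of_ncard_adj_le {K : SimpleGraph V} {l : List V}
    {c₀ c : V → Fin 3} {v₁ v₂ v₃ v₄ : V} (hc : IsSuperextension K l c₀ c)
    (hnodup : [v₁, v₂, v₃, v₄].Nodup) (h34 : K.Adj v₃ v₄)
    (hd₁ : {u | K.Adj v₁ u}.ncard ≤ 2) (hd₂ : {u | K.Adj v₂ u}.ncard ≤ 2)
    (hd₃ : {u | K.Adj v₃ u}.ncard ≤ 2) (hd₄ : {u | K.Adj v₄ u}.ncard ≤ 4)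
    (hl : v₁ ∉ l ∧ v₂ ∉ l ∧ v₃ ∉ l ∧ v₄ ∉ l) :
    ∃ c', IsSuperextension K l c₀ c' ∧ ProperAt K c' v₁ ∧ ProperAt K c' v₂ ∧
      ProperAt K c' v₃ ∧ (c' v₄ = 0 → {u | K.Adj v₄ u ∧ c' u = 0}.ncard ≤ 1) := by
  obtain ⟨hv₁, hv₂, hv₃, hv₄⟩ := hl
  obtain ⟨⟨h12, h13, h14⟩, ⟨h23, h24⟩, -⟩ := by simpa using hnodup
  set H₁ := delVerts K {v₂}
  set H₃ := delVerts H₁ {v₁}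
  have hH₁ : H₁ ≤ K := delVerts_le _
  have hH₃ : H₃ ≤ K := (delVerts_le _).trans hH₁
  -- so that a `0`-coloured `v₄` ends up with at most one `0`-coloured neighbour
  obtain ⟨c₄, hc₄, hv₄0⟩ := (hc.mono ((delVerts_le _).trans hH₃)).exists_nonzero_or_two_colors
    (G := delVerts H₃ {v₃}) hv₄
  obtain ⟨c₃, hc₃, hc₃eq, hp₃, -⟩ := hc₄.exists_properAt hv₃ ((ncard_adj_le_of_le hH₃ v₃).trans hd₃)
  obtain ⟨c₁, hc₁, hc₁eq, hp₁, hp₁'⟩ :=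
    hc₃.exists_properAt hv₁ ((ncard_adj_le_of_le hH₁ v₁).trans hd₁)
  obtain ⟨c₂, hc₂, hc₂eq, hp₂, hp₂'⟩ := hc₁.exists_properAt hv₂ hd₂
  have hp₂₃ : ProperAt K c₂ v₃ := hp₂' v₃ (Ne.symm h23) (hp₁' v₃ (Ne.symm h13) hp₃)
  have hc₂c₄ : ∀ y, y ≠ v₂ → y ≠ v₁ → y ≠ v₃ → c₂ y = c₄ y := fun y hy₂ hy₁ hy₃ => by
    rw [hc₂eq y hy₂, hc₁eq y hy₁, hc₃eq y hy₃]
  refine ⟨c₂, hc₂, hp₂' v₁ h12 hp₁, hp₂, hp₂₃, fun h0 => ?_⟩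
  obtain ⟨⟨a, ha, ha1⟩, ⟨b, hb, hb2⟩⟩ :=
    hv₄0 (hc₂c₄ v₄ (Ne.symm h24) (Ne.symm h14) h34.ne' ▸ h0)
  obtain ⟨⟨⟨haK, -, ha₂⟩, -, ha₁⟩, -, ha₃⟩ := ha
  obtain ⟨⟨⟨hbK, -, hb₂⟩, -, hb₁⟩, -, hb₃⟩ := hb
  refine ncard_adj_color_eq_zero_le_one hd₄ h34.symm (fun h => hp₂₃ v₄ h34 (h0.trans h.symm))
    haK hbK ha₃ hb₃ ?_ ?_
  · rw [hc₂c₄ a ha₂ ha₁ ha₃, ha1]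
  · rw [hc₂c₄ b hb₂ hb₁ hb₃, hb2]

lemma superextendable_of_superextendable_delVerts {G : SimpleGraph V} {l : List V}
    {v v₁ v₂ v₃ v₄ : V} (hdeg : {u | G.Adj v u}.ncard ≤ 4)
    (hN : ∀ u, G.Adj v u → u = v₁ ∨ u = v₂ ∨ u = v₃ ∨ u = v₄)
    (hadj : G.Adj v v₁ ∧ G.Adj v v₂ ∧ G.Adj v v₃ ∧ G.Adj v v₄)
    (hnodup : [v₁, v₂, v₃, v₄].Nodup) (h34 : G.Adj v₃ v₄)
    (hd₁ : {u | G.Adj v₁ u}.ncard ≤ 3) (hd₂ : {u | G.Adj v₂ u}.ncard ≤ 3)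
    (hd₃ : {u | G.Adj v₃ u}.ncard ≤ 3) (hd₄ : {u | G.Adj v₄ u}.ncard ≤ 5)
    (hl : v ∉ l ∧ v₁ ∉ l ∧ v₂ ∉ l ∧ v₃ ∉ l ∧ v₄ ∉ l)
    (hD : Superextendable (delVerts G {v}) l) : Superextendable G l := by
  obtain ⟨hav₁, hav₂, hav₃, hav₄⟩ := hadj
  obtain ⟨hv, hvs⟩ := hl
  intro c₀ hc₀
  obtain ⟨c, hc : IsSuperextension (delVerts G {v}) l c₀ c⟩ := hD c₀ hc₀
  obtain ⟨c', hc', hp₁, hp₂, hp₃, hp₄⟩ := hc.exists_properAt_of_ncard_adj_le hnodup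
    ⟨h34, hav₃.ne', hav₄.ne'⟩ (by linarith [ncard_adj_delVerts_add_one hav₁.symm])
    (by linarith [ncard_adj_delVerts_add_one hav₂.symm])
    (by linarith [ncard_adj_delVerts_add_one hav₃.symm])
    (by linarith [ncard_adj_delVerts_add_one hav₄.symm]) hvs
  refine hc'.exists_of_ncard_adj_le_four hv hdeg (fun y hy hy0 => ?_) fun u hu hvu => ?_
  · rcases hN y hy with rfl | rfl | rfl | rfl
    exacts [hy0 ▸ hp₁.ncard_adj_eq_le 1, hy0 ▸ hp₂.ncard_adj_eq_le 1,
      hy0 ▸ hp₃.ncard_adj_eq_le 1, hp₄ hy0]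
  · rcases hN u hvu with rfl | rfl | rfl | rfl <;> simp_all

theorem mincex_no_four_vertex_with_two_bad_faces_general
    (P : PlaneGraph V) (C₀ : List V) (h : IsMinCex P C₀)
    (v v₁ v₂ v₃ v₄ w : V)
    (hdeg : P.deg v = 4)
    (hadj : P.G.Adj v v₁ ∧ P.G.Adj v v₂ ∧ P.G.Adj v v₃ ∧ P.G.Adj v v₄)
    (hnodup : [v₁, v₂, v₃, v₄].Nodup)
    (hf1 : P.IsFace [v₃, v, v₄]) (hd3 : P.deg v₃ = 3) (hd4 : P.deg v₄ ≤ 5)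
    (hd1 : P.deg v₁ = 3) (hd2 : P.deg v₂ = 3)
    (hC : v ∉ C₀ ∧ v₁ ∉ C₀ ∧ v₂ ∉ C₀ ∧ v₃ ∉ C₀ ∧ v₄ ∉ C₀ ∧ w ∉ C₀) :
    False := by
  obtain ⟨hv, hv₁, hv₂, hv₃, hv₄, -⟩ := hC
  have h34 : P.G.Adj v₃ v₄ := hf1.adj_of_length_eq_three rfl (by simp) (by simp)
    (by simp only [List.nodup_cons, List.mem_cons] at hnodup; tauto)
  have hN : ∀ u, P.G.Adj v u → u = v₁ ∨ u = v₂ ∨ u = v₃ ∨ u = v₄ := fun u hu => by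
    simpa using mem_of_adj_of_ncard_le_length hnodup (by simpa using hadj) hdeg.le hu
  have hD : Superextendable (delVerts P.G {v}) C₀ :=
    h.superextendable_of_lt (delVerts_lt rfl hadj.1)
      (h.2.1.delVerts fun u hu huv => hv (Set.mem_singleton_iff.mp huv ▸ hu))
  exact h.2.2.2.1 (superextendable_of_superextendable_delVerts hdeg.le hN hadj hnodup h34
    hd1.le hd2.le hd3.le hd4 ⟨hv, hv₁, hv₂, hv₃, hv₄⟩ hD)

/-- In the minimal counterexample `(G, C₀)` (with `C₀` bounding the
outer face), a 4-vertex `v` with neighbors `v₁, v₂, v₃, v₄` cannot simultaneously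
be incident to a `(3,4,5⁻)`-face `f₁ = v₃vv₄` and a `(3,4,3,5⁺)`-face
`f₂ = v₁vv₂w` with `(b(f₁) ∪ b(f₂)) ∩ C₀ = ∅`. -/
theorem mincex_no_four_vertex_with_two_bad_faces
    (P : PlaneGraph V) (C₀ : List V) (h : IsMinCex P C₀)
    (houter : SameCycle C₀ P.outer)
    (v v₁ v₂ v₃ v₄ w : V)
    (hdeg : P.deg v = 4)
    (hadj : P.G.Adj v v₁ ∧ P.G.Adj v v₂ ∧ P.G.Adj v v₃ ∧ P.G.Adj v v₄)
    (hnodup : [v₁, v₂, v₃, v₄].Nodup)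
    (hf1 : P.IsFace [v₃, v, v₄]) (hd3 : P.deg v₃ = 3) (hd4 : P.deg v₄ ≤ 5)
    (hf2 : P.IsFace [v₁, v, v₂, w]) (hd1 : P.deg v₁ = 3) (hd2 : P.deg v₂ = 3)
    (hdw : 5 ≤ P.deg w)
    (hC : v ∉ C₀ ∧ v₁ ∉ C₀ ∧ v₂ ∉ C₀ ∧ v₃ ∉ C₀ ∧ v₄ ∉ C₀ ∧ w ∉ C₀) :
    False :=
  mincex_no_four_vertex_with_two_bad_faces_general P C₀ h v v₁ v₂ v₃ v₄ w hdeg hadj hnodup hf1 hd3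
    hd4 hd1 hd2 hC
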